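/- arXiv:math/0407345 — 5 statements merged into one kernel-verified Lean document; each statement's English description precedes it below -/
import Mathlib

section
/- Let $k \in \mathbb{N}$ and $0 < m_1 < m_2 < \cdots < m_k$ be real numbers. Then there exists a constant $c > 0$ such that for all $S > 0$, the integral of $e^{t_1 + \cdots + t_k}$ over the simplex $\Delta = \{(t_1,\ldots,t_k) : t_i \geq 0 \text{ for all } i, \sum_{i=1}^k m_i t_i \leq S\}$ is at most $c \, e^{S/m_1}$. -/
/-!
Integrate out `t₀` first. On the simplex, `t₀ ≤ (S - ∑_{i ≥ 1} mᵢ tᵢ) / m₀`,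
and `∫_{-∞}^T eˣ dx = e^T`, so what is left of `e^{t₀ + ⋯ + t_{k-1}}` is
`e^{S/m₀} ∏_{i ≥ 1} e^{-(mᵢ/m₀ - 1) tᵢ}` on the positive orthant. Since `mᵢ > m₀` for
`i ≥ 1`, this integrates to `e^{S/m₀} ∏_{i ≥ 1} m₀ / (mᵢ - m₀)`.
-/

open MeasureTheory Set Real

def weightedSimplex {ι : Type*} [Fintype ι] (m : ι → ℝ) (S : ℝ) : Set (ι → ℝ) :=
  {t | (∀ i, 0 ≤ t i) ∧ ∑ i, m i * t i ≤ S}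

theorem measurableSet_weightedSimplex {ι : Type*} [Fintype ι] (m : ι → ℝ) (S : ℝ) :
    MeasurableSet (weightedSimplex m S) := by
  unfold weightedSimplex
  measurability

theorem integral_prod_indicator_exp_mul {ι : Type*} [Fintype ι] {a : ι → ℝ}
    (ha : ∀ i, a i < 0) :
    ∫ y : ι → ℝ, ∏ i, (Ici 0).indicator (fun s => exp (a i * s)) (y i) =
      ∏ i, (-a i)⁻¹ := by
  rw [integral_fintype_prod_volume_eq_prod]
  refine Finset.prod_congr rfl fun i _ => ?_
  rw [integral_indicator measurableSet_Ici, integral_Ici_eq_integral_Ioi,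
    integral_exp_mul_Ioi (ha i), mul_zero, exp_zero, inv_neg, neg_div, one_div]

theorem integrable_prod_indicator_exp_mul {ι : Type*} [Fintype ι] {a : ι → ℝ}
    (ha : ∀ i, a i < 0) :
    Integrable fun y : ι → ℝ => ∏ i, (Ici 0).indicator (fun s => exp (a i * s)) (y i) :=
  Integrable.fintype_prod fun i => by
    rw [integrable_indicator_iff measurableSet_Ici, integrableOn_Ici_iff_integrableOn_Ioi]
    exact integrableOn_exp_mul_Ioi (ha i) 0

theorem lintegral_exp_Iic (T : ℝ) :
    ∫⁻ x in Iic T, ENNReal.ofReal (exp x) = ENNReal.ofReal (exp T) := by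
  rw [← ofReal_integral_eq_lintegral_ofReal (integrableOn_exp_Iic T)
    (ae_of_all _ fun x => (exp_pos x).le), integral_exp_Iic]

theorem indicator_weightedSimplex_cons_le {n : ℕ} {m : Fin (n + 1) → ℝ} (h0 : 0 < m 0)
    (S x : ℝ) (y : Fin n → ℝ) :
    (weightedSimplex m S).indicator (fun t => ENNReal.ofReal (exp (∑ i, t i))) (Fin.cons x y) ≤
      (Iic ((S - ∑ i, m i.succ * y i) / m 0)).indicator (fun x => ENNReal.ofReal (exp x)) x *
        ENNReal.ofReal (∏ i, (Ici 0).indicator exp (y i)) := by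
  by_cases hxy : (Fin.cons x y : Fin (n + 1) → ℝ) ∈ weightedSimplex m S
  · obtain ⟨hnonneg, hS⟩ := id hxy
    have hy : ∀ i, 0 ≤ y i := fun i => by simpa using hnonneg i.succ
    have hx : x ≤ (S - ∑ i, m i.succ * y i) / m 0 := by
      rw [le_div_iff₀' h0]
      simp only [Fin.sum_univ_succ, Fin.cons_zero, Fin.cons_succ] at hS
      linarith
    rw [indicator_of_mem hxy, indicator_of_mem (mem_Iic.2 hx),
      ← ENNReal.ofReal_mul (exp_pos x).le, Fin.sum_univ_succ, exp_add, exp_sum]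
    simp [indicator_of_mem, hy]
  · simp [indicator_of_notMem hxy]

theorem lintegral_indicator_weightedSimplex_cons_le {n : ℕ} {m : Fin (n + 1) → ℝ}
    (h0 : 0 < m 0) (S : ℝ) (y : Fin n → ℝ) :
    ∫⁻ x, (weightedSimplex m S).indicator (fun t => ENNReal.ofReal (exp (∑ i, t i)))
        (Fin.cons x y) ≤
      ENNReal.ofReal (exp (S / m 0) *
        ∏ i, (Ici 0).indicator (fun s => exp ((1 - m i.succ / m 0) * s)) (y i)) := by
  have hexp : exp ((S - ∑ i, m i.succ * y i) / m 0) * ∏ i, (Ici 0).indicator exp (y i) =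
      exp (S / m 0) * ∏ i, (Ici 0).indicator (fun s => exp ((1 - m i.succ / m 0) * s)) (y i) := by
    rw [sub_div, Finset.sum_div, sub_eq_add_neg, ← Finset.sum_neg_distrib, exp_add, exp_sum,
      mul_assoc, ← Finset.prod_mul_distrib]
    refine congrArg _ (Finset.prod_congr rfl fun i _ => ?_)
    by_cases hy : y i ∈ Ici 0
    · rw [indicator_of_mem hy, indicator_of_mem hy, ← exp_add]
      ring_nf
    · rw [indicator_of_notMem hy, indicator_of_notMem hy, mul_zero]
  calc _ ≤ ∫⁻ x, (Iic ((S - ∑ i, m i.succ * y i) / m 0)).indicator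
          (fun x => ENNReal.ofReal (exp x)) x *
            ENNReal.ofReal (∏ i, (Ici 0).indicator exp (y i)) :=
        lintegral_mono fun x => indicator_weightedSimplex_cons_le h0 S x y
    _ = _ := by
      have hexpm : Measurable fun x => ENNReal.ofReal (exp x) := by fun_prop
      rw [lintegral_mul_const _ (hexpm.indicator measurableSet_Iic),
        lintegral_indicator measurableSet_Iic, lintegral_exp_Iic,
        ← ENNReal.ofReal_mul (exp_pos _).le, hexp]

theorem lintegral_exp_sum_weightedSimplex_le {n : ℕ} {m : Fin (n + 1) → ℝ} (h0 : 0 < m 0)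
    (hgap : ∀ i : Fin n, m 0 < m i.succ) (S : ℝ) :
    ∫⁻ t in weightedSimplex m S, ENNReal.ofReal (exp (∑ i, t i)) ≤
      ENNReal.ofReal (exp (S / m 0) * ∏ i : Fin n, (m i.succ / m 0 - 1)⁻¹) := by
  have hrate : ∀ i : Fin n, 1 - m i.succ / m 0 < 0 := fun i => by
    rw [sub_neg, one_lt_div h0]; exact hgap i
  have hF : Measurable fun t : Fin (n + 1) → ℝ => ENNReal.ofReal (exp (∑ i, t i)) := by
    fun_prop
  rw [← lintegral_indicator (measurableSet_weightedSimplex m S),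
    ← (volume_preserving_piFinSuccAbove (fun _ => ℝ) 0).symm.lintegral_comp_emb
      (MeasurableEquiv.measurableEmbedding _), Measure.volume_eq_prod,
    lintegral_prod_symm _ (Measurable.aemeasurable <| by
      exact (hF.indicator (measurableSet_weightedSimplex m S)).comp
        (MeasurableEquiv.measurable _))]
  simp only [MeasurableEquiv.piFinSuccAbove_symm_apply, Fin.insertNthEquiv,
    Equiv.coe_fn_mk, Fin.insertNth_zero']
  calc _ ≤ ∫⁻ y : Fin n → ℝ, ENNReal.ofReal (exp (S / m 0) *
          ∏ i, (Ici 0).indicator (fun s => exp ((1 - m i.succ / m 0) * s)) (y i)) :=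
        lintegral_mono fun y => lintegral_indicator_weightedSimplex_cons_le h0 S y
    _ = _ := by
      rw [← ofReal_integral_eq_lintegral_ofReal
          ((integrable_prod_indicator_exp_mul hrate).const_mul _) (ae_of_all _ fun y =>
            mul_nonneg (exp_pos _).le (Finset.prod_nonneg fun i _ =>
              indicator_nonneg (fun s _ => (exp_pos _).le) _)),
        integral_const_mul, integral_prod_indicator_exp_mul hrate]
      simp only [neg_sub]

/-- Lemma on integrals of exponentials over simplices: for `0 < m 0 < m 1 < ... < m (k-1)`,
there is `c > 0` such that for all `S > 0`,
`∫_{Δ} e^{t₁+⋯+t_k} dt ≤ c e^{S / m 0}` where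
`Δ = {t : ∀ i, 0 ≤ t i, ∑ m i * t i ≤ S}`. -/
theorem stmt0 (k : ℕ) (hk : 0 < k) (m : Fin k → ℝ)
    (hpos : 0 < m ⟨0, hk⟩) (hmono : StrictMono m) :
    ∃ c : ℝ, 0 < c ∧ ∀ S : ℝ, 0 < S →
      (∫ t in {t : Fin k → ℝ | (∀ i, 0 ≤ t i) ∧ ∑ i, m i * t i ≤ S},
          Real.exp (∑ i, t i)) ≤ c * Real.exp (S / m ⟨0, hk⟩) := by
  obtain ⟨n, rfl⟩ := Nat.exists_eq_add_one_of_ne_zero hk.ne'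
  change 0 < m 0 at hpos
  have hgap : ∀ i : Fin n, m 0 < m i.succ := fun i => hmono i.succ_pos
  have hc : 0 < ∏ i : Fin n, (m i.succ / m 0 - 1)⁻¹ :=
    Finset.prod_pos fun i _ => inv_pos.2 (sub_pos.2 ((one_lt_div hpos).2 (hgap i)))
  refine ⟨_, hc, fun S _ => ?_⟩
  rw [integral_eq_lintegral_of_nonneg_ae (ae_of_all _ fun t => (exp_pos _).le)
    (by fun_prop : Continuous fun t : Fin (n + 1) → ℝ => exp (∑ i, t i)).aestronglyMeasurable,
    mul_comm]
  exact ENNReal.toReal_le_of_le_ofReal (mul_pos (exp_pos _) hc).le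
    (lintegral_exp_sum_weightedSimplex_le hpos hgap S)
end

section
/- Let $\lambda$ be a nonzero linear functional on $\mathbb{R}^r$ and set $\delta = \max_{\|Y\| \leq 1} \lambda(Y)$ (with $\|\cdot\|$ the Euclidean norm). Then there is a constant $C > 0$ such that $\int_{B(0,T)} e^{\lambda(Y)} \, dY \sim C \, T^{(r-1)/2} e^{\delta T}$ as $T \to \infty$, i.e., the ratio of the two sides tends to 1. -/
open MeasureTheory Filter Topology
open Set Real Metric
open scoped InnerProductSpace

/-!
Write `l = ⟪v, ·⟫`, so that `δ = ‖v‖`. A reflection taking `e₀` to `v / ‖v‖` preserves the ball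
and Lebesgue measure, which turns the integral into `∫_{B(0,T)} e^{δ x₀} dx`. Slicing the ball
orthogonally to `e₀` gives `κ ∫_{-T}^{T} e^{δ t} (T² - t²)^{m/2} dt`, where `m = r - 1` and `κ` is
the volume of the unit ball of `ℝ^m`. The substitution `t = T - s` pulls out `T^{m/2} e^{δ T}` and
leaves `∫_0^{2T} (s (2 - s / T))^{m/2} e^{-δ s} ds`, which tends by dominated convergence to
`∫_0^∞ (2 s)^{m/2} e^{-δ s} ds = 2^{m/2} Γ(m/2 + 1) / δ^{m/2 + 1}`.
-/

section Laplace

variable {δ p : ℝ}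

lemma integrableOn_two_mul_rpow_mul_exp_neg_mul (hp : -1 < p) (hδ : 0 < δ) :
    IntegrableOn (fun s : ℝ => (2 * s) ^ p * exp (-(δ * s))) (Ioi 0) := by
  refine IntegrableOn.congr_fun ((integrableOn_rpow_mul_exp_neg_mul_rpow hp one_pos hδ).const_mul
    ((2 : ℝ) ^ p)) (fun s hs => ?_) measurableSet_Ioi
  simp only [rpow_one, mul_rpow zero_le_two (le_of_lt hs), neg_mul, mul_assoc]

lemma integral_two_mul_rpow_mul_exp_neg_mul (hp : -1 < p) (hδ : 0 < δ) :
    ∫ s in Ioi 0, (2 * s) ^ p * exp (-(δ * s)) = 2 ^ p * ((1 / δ) ^ (p + 1) * Gamma (p + 1)) := by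
  rw [← integral_rpow_mul_exp_neg_mul_Ioi (by linarith) hδ, ← integral_const_mul,
    add_sub_cancel_right]
  refine setIntegral_congr_fun measurableSet_Ioi (fun s hs => ?_)
  simp only [mul_rpow zero_le_two (le_of_lt hs), mul_assoc]

lemma mul_two_sub_div_mem_Icc {s T : ℝ} (hT : 0 < T) (hs : s ∈ Icc 0 (2 * T)) :
    s * (2 - s / T) ∈ Icc 0 (2 * s) := by
  have h : s / T ≤ 2 := by rw [div_le_iff₀ hT]; linarith [hs.2]
  have h0 : 0 ≤ s / T := div_nonneg hs.1 hT.le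
  constructor <;> nlinarith [hs.1]

lemma intervalIntegral_exp_mul_mul_sq_sub_sq_rpow (δ p : ℝ) {T : ℝ} (hT : 0 < T) :
    ∫ t in -T..T, exp (δ * t) * (T ^ 2 - t ^ 2) ^ p =
      T ^ p * exp (δ * T) * ∫ s in 0..2 * T, (s * (2 - s / T)) ^ p * exp (-(δ * s)) := by
  rw [← intervalIntegral.integral_const_mul]
  have hsub := intervalIntegral.integral_comp_sub_left
    (fun t => exp (δ * t) * (T ^ 2 - t ^ 2) ^ p) (a := 0) (b := 2 * T) T
  rw [show T - 2 * T = -T by ring, sub_zero] at hsub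
  rw [← hsub]
  refine intervalIntegral.integral_congr (fun s hs => ?_)
  rw [uIcc_of_le (by linarith)] at hs
  have hfac : T ^ 2 - (T - s) ^ 2 = s * (2 - s / T) * T := by field_simp; ring
  rw [hfac, mul_rpow (mul_two_sub_div_mem_Icc hT hs).1 hT.le,
    show δ * (T - s) = δ * T + -(δ * s) by ring, exp_add]
  ring

lemma tendsto_intervalIntegral_mul_two_sub_div_rpow_mul_exp (hp : 0 ≤ p) (hδ : 0 < δ) :
    Tendsto (fun T => ∫ s in 0..2 * T, (s * (2 - s / T)) ^ p * exp (-(δ * s))) atTop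
      (𝓝 (∫ s in Ioi 0, (2 * s) ^ p * exp (-(δ * s)))) := by
  let g : ℝ → ℝ → ℝ := fun T s => (s * (2 - s / T)) ^ p * exp (-(δ * s))
  have hrw : ∀ᶠ T in atTop,
      ∫ s in Ioi 0, (Ioc 0 (2 * T)).indicator (g T) s = ∫ s in 0..2 * T, g T s := by
    filter_upwards [eventually_gt_atTop 0] with T hT
    rw [setIntegral_indicator measurableSet_Ioc, inter_eq_self_of_subset_right Ioc_subset_Ioi_self,
      intervalIntegral.integral_of_le (by linarith)]
  refine Tendsto.congr' hrw (tendsto_integral_filter_of_dominated_convergence _ ?_ ?_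
    (integrableOn_two_mul_rpow_mul_exp_neg_mul (p := p) (by linarith) hδ) ?_)
  · exact Eventually.of_forall fun T =>
      ((by fun_prop : Measurable (g T)).indicator measurableSet_Ioc).aestronglyMeasurable
  · filter_upwards [eventually_gt_atTop 0] with T hT
    filter_upwards [ae_restrict_mem measurableSet_Ioi] with s (hs : 0 < s)
    by_cases hsT : s ∈ Ioc 0 (2 * T)
    · obtain ⟨h0, h2⟩ := mul_two_sub_div_mem_Icc hT (Ioc_subset_Icc_self hsT)
      rw [indicator_of_mem hsT, norm_of_nonneg (by positivity)]
      dsimp only [g]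
      gcongr
    · rw [indicator_of_notMem hsT, norm_zero]
      positivity
  · filter_upwards [ae_restrict_mem measurableSet_Ioi] with s (hs : 0 < s)
    have hlim : Tendsto (fun T => g T s) atTop (𝓝 ((2 * s) ^ p * exp (-(δ * s)))) := by
      have h : Tendsto (fun T => s * (2 - s / T)) atTop (𝓝 (s * (2 - 0))) :=
        (tendsto_const_nhds.div_atTop tendsto_id).const_sub 2 |>.const_mul s
      rw [sub_zero, mul_comm] at h
      exact ((continuousAt_rpow_const _ _ (Or.inr hp)).tendsto.comp h).mul_const _
    refine hlim.congr' ?_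
    filter_upwards [eventually_ge_atTop s] with T hT
    rw [indicator_of_mem (show s ∈ Ioc 0 (2 * T) from ⟨hs, by linarith⟩)]

lemma tendsto_intervalIntegral_exp_mul_mul_sq_sub_sq_rpow_div (hp : 0 ≤ p) (hδ : 0 < δ) :
    Tendsto (fun T => (∫ t in -T..T, exp (δ * t) * (T ^ 2 - t ^ 2) ^ p) / (T ^ p * exp (δ * T)))
      atTop (𝓝 (2 ^ p * ((1 / δ) ^ (p + 1) * Gamma (p + 1)))) := by
  rw [← integral_two_mul_rpow_mul_exp_neg_mul (by linarith) hδ]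
  refine (tendsto_intervalIntegral_mul_two_sub_div_rpow_mul_exp hp hδ).congr' ?_
  filter_upwards [eventually_gt_atTop 0] with T hT
  rw [intervalIntegral_exp_mul_mul_sq_sub_sq_rpow δ p hT, mul_div_cancel_left₀ _ (by positivity)]

end Laplace

lemma setIntegral_comp_fst_eq_integral_measureReal_preimage_prodMk {α β : Type*}
    [MeasurableSpace α] [MeasurableSpace β] {μ : Measure α} {ν : Measure β} [SFinite μ]
    [SFinite ν] {S : Set (α × β)} (hS : MeasurableSet S) {f : α → ℝ}
    (hf : IntegrableOn (fun p => f p.1) S (μ.prod ν)) :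
    ∫ p in S, f p.1 ∂μ.prod ν = ∫ x, ν.real (Prod.mk x ⁻¹' S) * f x ∂μ := by
  rw [← integral_indicator hS, integral_prod _ ((integrable_indicator_iff hS).mpr hf)]
  congr 1 with x
  rw [← smul_eq_mul, ← integral_indicator_const _ (measurable_prodMk_left hS)]
  rfl

noncomputable def finSuccEuclideanEquiv (m : ℕ) :
    EuclideanSpace ℝ (Fin (m + 1)) ≃ᵐ ℝ × EuclideanSpace ℝ (Fin m) :=
  (MeasurableEquiv.toLp 2 (Fin (m + 1) → ℝ)).symm.trans
    ((MeasurableEquiv.piFinSuccAbove (fun _ => ℝ) 0).trans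
      ((MeasurableEquiv.refl ℝ).prodCongr (MeasurableEquiv.toLp 2 (Fin m → ℝ))))

section Slicing

variable {m : ℕ}

lemma measurePreserving_finSuccEuclideanEquiv_symm :
    MeasurePreserving (finSuccEuclideanEquiv m).symm :=
  ((EuclideanSpace.volume_preserving_symm_measurableEquiv_toLp _).trans
    ((volume_preserving_piFinSuccAbove (fun _ => ℝ) 0).trans
      ((MeasurePreserving.id volume).prod (PiLp.volume_preserving_toLp _)))).symm

lemma norm_finSuccEuclideanEquiv_symm_sq (p : ℝ × EuclideanSpace ℝ (Fin m)) :
    ‖(finSuccEuclideanEquiv m).symm p‖ ^ 2 = p.1 ^ 2 + ‖p.2‖ ^ 2 := by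
  rw [EuclideanSpace.norm_sq_eq, EuclideanSpace.norm_sq_eq, Fin.sum_univ_succ]
  simp only [Real.norm_eq_abs, sq_abs]
  rfl

lemma measureReal_setOf_norm_sq_le {c : ℝ} (hc : 0 ≤ c) :
    volume.real {y : EuclideanSpace ℝ (Fin m) | ‖y‖ ^ 2 ≤ c} =
      c ^ ((m : ℝ) / 2) * volume.real (ball (0 : EuclideanSpace ℝ (Fin m)) 1) := by
  have hset : {y : EuclideanSpace ℝ (Fin m) | ‖y‖ ^ 2 ≤ c} = closedBall 0 (√c) := by
    ext y
    rw [mem_closedBall_zero_iff, mem_ofPred_eq, le_sqrt (norm_nonneg y) hc]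
  rw [hset, measureReal_def, Measure.addHaar_closedBall _ _ (sqrt_nonneg c), ENNReal.toReal_mul,
    ENNReal.toReal_ofReal (by positivity), ← measureReal_def, finrank_euclideanSpace_fin,
    sqrt_eq_rpow, ← rpow_natCast, ← rpow_mul hc]
  ring_nf

lemma integral_measureReal_setOf_norm_sq_le_mul (f : ℝ → ℝ) {T : ℝ} (hT : 0 ≤ T) :
    ∫ t, volume.real {y : EuclideanSpace ℝ (Fin m) | ‖y‖ ^ 2 ≤ T ^ 2 - t ^ 2} * f t =
      volume.real (ball (0 : EuclideanSpace ℝ (Fin m)) 1) *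
        ∫ t in -T..T, f t * (T ^ 2 - t ^ 2) ^ ((m : ℝ) / 2) := by
  calc ∫ t, volume.real {y : EuclideanSpace ℝ (Fin m) | ‖y‖ ^ 2 ≤ T ^ 2 - t ^ 2} * f t
      = ∫ t in Icc (-T) T,
          volume.real {y : EuclideanSpace ℝ (Fin m) | ‖y‖ ^ 2 ≤ T ^ 2 - t ^ 2} * f t := by
        refine (setIntegral_eq_integral_of_forall_compl_eq_zero fun t ht => ?_).symm
        have hTt : T ^ 2 < t ^ 2 := by
          rw [sq_lt_sq, abs_of_nonneg hT]
          exact not_le.mp (by rwa [mem_Icc, ← abs_le] at ht)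
        have hempty : {y : EuclideanSpace ℝ (Fin m) | ‖y‖ ^ 2 ≤ T ^ 2 - t ^ 2} = ∅ :=
          eq_empty_of_forall_notMem fun y hy => by nlinarith [hy.out, sq_nonneg ‖y‖]
        rw [hempty, measureReal_empty, zero_mul]
    _ = ∫ t in Icc (-T) T, volume.real (ball (0 : EuclideanSpace ℝ (Fin m)) 1) *
          (f t * (T ^ 2 - t ^ 2) ^ ((m : ℝ) / 2)) :=
        setIntegral_congr_fun measurableSet_Icc fun t ht => by
          rw [measureReal_setOf_norm_sq_le (by nlinarith [ht.1, ht.2])]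
          ring
    _ = _ := by
        rw [integral_const_mul, integral_Icc_eq_integral_Ioc,
          ← intervalIntegral.integral_of_le (by linarith)]

lemma integral_closedBall_comp_apply_zero {f : ℝ → ℝ} (hf : Continuous f) {T : ℝ} (hT : 0 ≤ T) :
    ∫ x in closedBall (0 : EuclideanSpace ℝ (Fin (m + 1))) T, f (x 0) =
      volume.real (ball (0 : EuclideanSpace ℝ (Fin m)) 1) *
        ∫ t in -T..T, f t * (T ^ 2 - t ^ 2) ^ ((m : ℝ) / 2) := by
  set e := finSuccEuclideanEquiv m
  set S : Set (ℝ × EuclideanSpace ℝ (Fin m)) := {p | p.1 ^ 2 + ‖p.2‖ ^ 2 ≤ T ^ 2}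
  have hpre : e.symm ⁻¹' closedBall 0 T = S := by
    ext p
    rw [mem_preimage, mem_closedBall_zero_iff, ← sq_le_sq₀ (norm_nonneg _) hT,
      norm_finSuccEuclideanEquiv_symm_sq]
    rfl
  have hslice : ∀ t, Prod.mk t ⁻¹' S = {y | ‖y‖ ^ 2 ≤ T ^ 2 - t ^ 2} := fun t => by
    ext y
    simp only [mem_preimage, S, mem_ofPred_eq, le_sub_iff_add_le']
  have hmp : MeasurePreserving e.symm := measurePreserving_finSuccEuclideanEquiv_symm
  have hint : IntegrableOn (fun p => f p.1) S := by
    rw [← hpre]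
    exact (hmp.integrableOn_comp_preimage e.symm.measurableEmbedding).mpr
      ((by fun_prop : Continuous fun x : EuclideanSpace ℝ (Fin (m + 1)) => f (x 0)).continuousOn
        |>.integrableOn_compact (isCompact_closedBall 0 T))
  rw [← integral_measureReal_setOf_norm_sq_le_mul f hT,
    ← hmp.setIntegral_preimage_emb e.symm.measurableEmbedding, hpre]
  rw [Measure.volume_eq_prod] at hint ⊢
  refine (setIntegral_comp_fst_eq_integral_measureReal_preimage_prodMk
    (isClosed_le (by fun_prop) continuous_const).measurableSet hint).trans ?_
  congr 1 with t
  rw [← hslice t]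

variable (m) in
noncomputable def ballExpIntegralConst (δ : ℝ) : ℝ :=
  volume.real (ball (0 : EuclideanSpace ℝ (Fin m)) 1) *
    (2 ^ ((m : ℝ) / 2) * ((1 / δ) ^ ((m : ℝ) / 2 + 1) * Gamma ((m : ℝ) / 2 + 1)))

lemma ballExpIntegralConst_pos {δ : ℝ} (hδ : 0 < δ) : 0 < ballExpIntegralConst m δ :=
  mul_pos (ENNReal.toReal_pos (measure_ball_pos volume 0 one_pos).ne' measure_ball_lt_top.ne)
    (by positivity)

lemma tendsto_integral_closedBall_exp_mul_apply_zero_div {δ : ℝ} (hδ : 0 < δ) :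
    Tendsto (fun T => (∫ x in closedBall (0 : EuclideanSpace ℝ (Fin (m + 1))) T, exp (δ * x 0)) /
        (T ^ ((m : ℝ) / 2) * exp (δ * T))) atTop (𝓝 (ballExpIntegralConst m δ)) := by
  refine ((tendsto_intervalIntegral_exp_mul_mul_sq_sub_sq_rpow_div (by positivity) hδ).const_mul
    _).congr' ?_
  filter_upwards [eventually_ge_atTop 0] with T hT
  rw [integral_closedBall_comp_apply_zero (f := fun t => exp (δ * t)) (by fun_prop) hT,
    mul_div_assoc]

end Slicing

lemma tendsto_div_const_mul_of_tendsto_div {α : Type*} {l : Filter α} {f g : α → ℝ} {C : ℝ}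
    (hC : C ≠ 0) (h : Tendsto (fun x => f x / g x) l (𝓝 C)) :
    Tendsto (fun x => f x / (C * g x)) l (𝓝 1) := by
  simpa only [div_div, mul_comm (g _), div_self hC] using h.div_const C

section Rotation

variable {E : Type*} [NormedAddCommGroup E] [InnerProductSpace ℝ E]

lemma isGreatest_inner_image_closedBall (v : E) :
    IsGreatest ((fun y => ⟪v, y⟫_ℝ) '' closedBall 0 1) ‖v‖ := by
  refine ⟨⟨‖v‖⁻¹ • v, ?_, ?_⟩, ?_⟩
  · rw [mem_closedBall_zero_iff, norm_smul, norm_inv, norm_norm]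
    exact inv_mul_le_one_of_le₀ le_rfl (norm_nonneg v)
  · simp only [real_inner_smul_right, real_inner_self_eq_norm_sq]
    rw [sq, ← mul_assoc, inv_mul_mul_self]
  · rintro _ ⟨y, hy, rfl⟩
    exact (real_inner_le_norm v y).trans
      (mul_le_of_le_one_right (norm_nonneg v) (mem_closedBall_zero_iff.mp hy))

lemma exists_linearIsometryEquiv_inner_apply {w : E} (hw : ‖w‖ = 1) (v : E) :
    ∃ R : E ≃ₗᵢ[ℝ] E, ∀ x, ⟪v, R x⟫_ℝ = ‖v‖ * ⟪w, x⟫_ℝ := by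
  rcases eq_or_ne v 0 with rfl | hv
  · exact ⟨LinearIsometryEquiv.refl ℝ E, fun x => by simp⟩
  set u := ‖v‖⁻¹ • v
  have hRw : (ℝ ∙ (w - u))ᗮ.reflection w = u :=
    Submodule.reflection_sub (hw.trans (norm_smul_inv_norm hv).symm)
  refine ⟨(ℝ ∙ (w - u))ᗮ.reflection, fun x => ?_⟩
  rw [← LinearIsometryEquiv.inner_map_map (ℝ ∙ (w - u))ᗮ.reflection w, hRw, real_inner_smul_left,
    ← mul_assoc, mul_inv_cancel₀ (norm_ne_zero_iff.mpr hv), one_mul]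

lemma setIntegral_closedBall_comp_linearIsometryEquiv [FiniteDimensional ℝ E] [MeasurableSpace E]
    [BorelSpace E] {F : Type*} [NormedAddCommGroup F] [NormedSpace ℝ F]
    (R : E ≃ₗᵢ[ℝ] E) (f : E → F) (T : ℝ) :
    ∫ x in closedBall 0 T, f (R x) = ∫ x in closedBall 0 T, f x := by
  simpa only [R.preimage_closedBall, map_zero] using R.measurePreserving.setIntegral_preimage_emb
    R.toHomeomorph.measurableEmbedding f (closedBall 0 T)

end Rotation

/-- For a nonzero linear functional `l` on `ℝ^r` with `δ = max_{‖Y‖ ≤ 1} l Y`,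
there is `C > 0` with `∫_{B(0,T)} e^{l Y} dY ∼ C T^{(r-1)/2} e^{δ T}` as `T → ∞`. -/
theorem stmt1 (r : ℕ) (l : EuclideanSpace ℝ (Fin r) →ₗ[ℝ] ℝ) (hl : l ≠ 0) (δ : ℝ)
    (hδ : IsGreatest ((fun Y => l Y) '' Metric.closedBall (0 : EuclideanSpace ℝ (Fin r)) 1) δ) :
    ∃ C : ℝ, 0 < C ∧
      Tendsto (fun T : ℝ =>
          (∫ Y in Metric.closedBall (0 : EuclideanSpace ℝ (Fin r)) T, Real.exp (l Y)) /
            (C * T ^ (((r : ℝ) - 1) / 2) * Real.exp (δ * T)))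
        atTop (𝓝 1) := by
  obtain ⟨m, rfl⟩ : ∃ m, r = m + 1 :=
    Nat.exists_eq_succ_of_ne_zero (by rintro rfl; exact hl (Subsingleton.elim _ _))
  set v := (InnerProductSpace.toDual ℝ _).symm l.toContinuousLinearMap
  have hlv : ∀ Y, l Y = ⟪v, Y⟫_ℝ := fun Y => by
    rw [InnerProductSpace.toDual_symm_apply]; rfl
  have hδv : δ = ‖v‖ := hδ.unique (by simpa only [hlv] using isGreatest_inner_image_closedBall v)
  have hδpos : 0 < δ :=
    hδv ▸ norm_pos_iff.mpr fun hv => hl (LinearMap.ext fun Y => by simp [hlv, hv])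
  obtain ⟨R, hR⟩ := exists_linearIsometryEquiv_inner_apply
    ((PiLp.norm_single 2 (fun _ => ℝ) (0 : Fin (m + 1)) 1).trans norm_one) v
  have hrot : ∀ T, ∫ Y in closedBall (0 : EuclideanSpace ℝ (Fin (m + 1))) T, exp (l Y) =
      ∫ x in closedBall (0 : EuclideanSpace ℝ (Fin (m + 1))) T, exp (δ * x 0) := fun T => by
    rw [← setIntegral_closedBall_comp_linearIsometryEquiv R]
    simp [hlv, hR, hδv, EuclideanSpace.inner_single_left]
  have hlim := tendsto_integral_closedBall_exp_mul_apply_zero_div (m := m) hδpos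
  simp_rw [← hrot] at hlim
  rw [show ((↑(m + 1) : ℝ) - 1) / 2 = (m : ℝ) / 2 by push_cast; ring]
  have hC := ballExpIntegralConst_pos (m := m) hδpos
  exact ⟨_, hC, by simpa only [mul_assoc] using tendsto_div_const_mul_of_tendsto_div hC.ne' hlim⟩
end

section
/- Let $\lambda$ be a linear functional on $\mathbb{R}^r$, let $\delta = \max_{\|Y\| \leq 1} \lambda(Y) > 0$, and suppose the maximum of $\lambda$ on the unit sphere is attained at a unique point $Y_0$. Let $S \subset \mathbb{R}^r$ be an open convex cone containing $Y_0$. Then $\int_{B(0,T) \cap S} e^{\lambda(Y)}\, dY \sim \int_{B(0,T)} e^{\lambda(Y)}\, dY$ as $T \to \infty$. -/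
/-!
Off the cone the functional is uniformly smaller than `δ`: by compactness of the unit sphere and
uniqueness of the maximiser `Y₀ ∈ S`, `l ≤ δ' < δ` on the sphere minus the open set `S`, hence
`l Y ≤ δ' ‖Y‖` on the complement of the cone. So the part of `B(0,T)` outside `S` contributes
`O(T^r e^{δ' T})`, whereas the unit ball around `(T - 1) Y₀` alone contributes `≫ e^{δ T}`.
-/

open MeasureTheory Filter Topology Metric Real Module

theorem IsCompact.exists_lt_forall_sdiff_le {X : Type*} [TopologicalSpace X] {K S : Set X}
    (hK : IsCompact K) (hS : IsOpen S) {f : X → ℝ} (hf : ContinuousOn f K) {δ : ℝ}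
    (hle : ∀ u ∈ K, f u ≤ δ) (hmax : ∀ u ∈ K, f u = δ → u ∈ S) :
    ∃ δ' < δ, ∀ u ∈ K \ S, f u ≤ δ' := by
  rcases (K \ S).eq_empty_or_nonempty with hempty | hne
  · exact ⟨δ - 1, by linarith, by simp [hempty]⟩
  obtain ⟨u₀, hu₀, hu₀max⟩ := (hK.diff hS).exists_isMaxOn hne (hf.mono Set.sdiff_subset)
  exact ⟨f u₀, (hle u₀ hu₀.1).lt_of_ne fun h => hu₀.2 (hmax u₀ hu₀.1 h), fun u hu => hu₀max hu⟩

theorem LinearMap.le_mul_norm_of_notMem_cone {E : Type*} [NormedAddCommGroup E]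
    [NormedSpace ℝ E] (l : E →ₗ[ℝ] ℝ) {S : Set E} (hS : ∀ Y ∈ S, ∀ c : ℝ, 0 < c → c • Y ∈ S)
    {A : ℝ} (hA : ∀ u : E, ‖u‖ = 1 → u ∉ S → l u ≤ A) {Y : E} (hY : Y ∉ S) :
    l Y ≤ A * ‖Y‖ := by
  rcases eq_or_ne Y 0 with rfl | hY0
  · simp
  have hYn : 0 < ‖Y‖ := norm_pos_iff.2 hY0
  have hY_eq : ‖Y‖ • (‖Y‖⁻¹ • Y) = Y := by rw [smul_smul, mul_inv_cancel₀ hYn.ne', one_smul]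
  have hu : ‖Y‖⁻¹ • Y ∉ S := fun h => hY (hY_eq ▸ hS _ h _ hYn)
  calc l Y = ‖Y‖ * l (‖Y‖⁻¹ • Y) := by rw [← smul_eq_mul, ← map_smul, hY_eq]
    _ ≤ ‖Y‖ * A := by
        gcongr
        exact hA _ (by rw [norm_smul, norm_inv, norm_norm, inv_mul_cancel₀ hYn.ne']) hu
    _ = A * ‖Y‖ := mul_comm _ _

section HaarEstimates

variable {E : Type*} [NormedAddCommGroup E] [NormedSpace ℝ E] [FiniteDimensional ℝ E]
  [MeasurableSpace E] [BorelSpace E] (μ : Measure E) [μ.IsAddHaarMeasure]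

theorem integrableOn_exp_closedBall (l : E →L[ℝ] ℝ) (x : E) (T : ℝ) :
    IntegrableOn (fun Y => exp (l Y)) (closedBall x T) μ :=
  (by fun_prop : Continuous fun Y => exp (l Y)).continuousOn.integrableOn_compact
    (isCompact_closedBall x T)

theorem setIntegral_closedBall_exp_pos (l : E →L[ℝ] ℝ) {T : ℝ} (hT : 0 < T) :
    0 < ∫ Y in closedBall 0 T, exp (l Y) ∂μ :=
  have : NeZero (μ.restrict (closedBall 0 T)) :=
    ⟨by simpa [Measure.restrict_eq_zero] using (measure_closedBall_pos μ 0 hT).ne'⟩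
  integral_exp_pos (integrableOn_exp_closedBall μ l 0 T)

theorem setIntegral_closedBall_inter_exp_le (f : E → ℝ) {s : Set E} {A T : ℝ} (hA : 0 ≤ A)
    (hT : 0 ≤ T) (hs : ∀ Y ∈ s, f Y ≤ A * ‖Y‖) :
    ∫ Y in closedBall 0 T ∩ s, exp (f Y) ∂μ ≤
      T ^ finrank ℝ E * μ.real (closedBall 0 1) * exp (A * T) := by
  have hbound : ∀ Y ∈ closedBall 0 T ∩ s, ‖exp (f Y)‖ ≤ exp (A * T) := fun Y hY => by
    rw [Real.norm_of_nonneg (exp_pos _).le, exp_le_exp]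
    calc f Y ≤ A * ‖Y‖ := hs Y hY.2
      _ ≤ A * T := mul_le_mul_of_nonneg_left (mem_closedBall_zero_iff.1 hY.1) hA
  calc ∫ Y in closedBall 0 T ∩ s, exp (f Y) ∂μ
      ≤ ‖∫ Y in closedBall 0 T ∩ s, exp (f Y) ∂μ‖ := le_norm_self _
    _ ≤ exp (A * T) * μ.real (closedBall 0 T ∩ s) :=
        norm_setIntegral_le_of_norm_le_const
          (measure_closedBall_lt_top.trans_le' (measure_mono Set.inter_subset_left)) hbound
    _ ≤ exp (A * T) * μ.real (closedBall 0 T) :=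
        mul_le_mul_of_nonneg_left
          (measureReal_mono Set.inter_subset_left measure_closedBall_lt_top.ne) (exp_pos _).le
    _ = T ^ finrank ℝ E * μ.real (closedBall 0 1) * exp (A * T) := by
        rw [Measure.addHaar_real_closedBall' μ 0 hT]; ring

theorem exp_mul_measureReal_le_setIntegral_closedBall_exp (l : E →L[ℝ] ℝ) {Y₀ : E}
    (hY₀ : ‖Y₀‖ = 1) {T : ℝ} (hT : 1 ≤ T) :
    exp (l Y₀ * (T - 1) - ‖l‖) * μ.real (closedBall 0 1) ≤
      ∫ Y in closedBall 0 T, exp (l Y) ∂μ := by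
  set w : E := (T - 1) • Y₀
  have hsub : closedBall w 1 ⊆ closedBall 0 T := closedBall_subset_closedBall' <| by
    rw [dist_zero_right, norm_smul, hY₀, mul_one, Real.norm_of_nonneg (by linarith)]
    linarith
  have hlow : ∀ Y ∈ closedBall w 1, l Y₀ * (T - 1) - ‖l‖ ≤ l Y := fun Y hY => by
    have hlw : l w = l Y₀ * (T - 1) := by simp [w, mul_comm]
    have hdev : ‖l (Y - w)‖ ≤ ‖l‖ :=
      calc ‖l (Y - w)‖ ≤ ‖l‖ * ‖Y - w‖ := l.le_opNorm _
        _ ≤ ‖l‖ := mul_le_of_le_one_right (norm_nonneg _) (by rwa [← dist_eq_norm])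
    have := neg_le_of_abs_le hdev
    rw [map_sub] at this
    linarith
  have hint := integrableOn_exp_closedBall μ l 0 T
  calc exp (l Y₀ * (T - 1) - ‖l‖) * μ.real (closedBall 0 1)
      = exp (l Y₀ * (T - 1) - ‖l‖) * μ.real (closedBall w 1) := by
        rw [Measure.addHaar_real_closedBall_center μ w]
    _ ≤ ∫ Y in closedBall w 1, exp (l Y) ∂μ :=
        setIntegral_ge_of_const_le_real measurableSet_closedBall measure_closedBall_lt_top.ne
          (fun Y hY => exp_le_exp.2 (hlow Y hY)) (hint.mono_set hsub)
    _ ≤ ∫ Y in closedBall 0 T, exp (l Y) ∂μ :=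
        setIntegral_mono_set hint (ae_of_all _ fun Y => (exp_pos _).le) hsub.eventuallyLE

theorem tendsto_setIntegral_closedBall_inter_exp_div_zero (l : E →L[ℝ] ℝ) {Y₀ : E}
    (hY₀ : ‖Y₀‖ = 1) {s : Set E} {A : ℝ} (hA : 0 ≤ A) (hAY₀ : A < l Y₀)
    (hs : ∀ Y ∈ s, l Y ≤ A * ‖Y‖) :
    Tendsto (fun T => (∫ Y in closedBall 0 T ∩ s, exp (l Y) ∂μ) /
      ∫ Y in closedBall 0 T, exp (l Y) ∂μ) atTop (𝓝 0) := by
  set n := finrank ℝ E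
  set c := μ.real (closedBall (0 : E) 1)
  have hlim :
      Tendsto (fun T => exp (l Y₀ + ‖l‖) * (T ^ n / exp ((l Y₀ - A) * T))) atTop (𝓝 0) := by
    simpa using ((isLittleO_pow_exp_pos_mul_atTop n (sub_pos.2 hAY₀)).tendsto_div_nhds_zero
      ).const_mul (exp (l Y₀ + ‖l‖))
  refine tendsto_of_tendsto_of_tendsto_of_le_of_le' tendsto_const_nhds hlim ?_ ?_
  · exact Eventually.of_forall fun T =>
      div_nonneg (integral_nonneg fun _ => (exp_pos _).le) (integral_nonneg fun _ => (exp_pos _).le)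
  filter_upwards [eventually_ge_atTop 1] with T hT
  have hexp : exp (A * T) =
      exp (l Y₀ + ‖l‖) * exp (-((l Y₀ - A) * T)) * exp (l Y₀ * (T - 1) - ‖l‖) := by
    rw [← exp_add, ← exp_add]; ring_nf
  rw [div_le_iff₀ (setIntegral_closedBall_exp_pos μ l (by linarith))]
  calc ∫ Y in closedBall 0 T ∩ s, exp (l Y) ∂μ ≤ T ^ n * c * exp (A * T) :=
        setIntegral_closedBall_inter_exp_le μ l hA (by linarith) hs
    _ = exp (l Y₀ + ‖l‖) * (T ^ n / exp ((l Y₀ - A) * T)) *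
          (exp (l Y₀ * (T - 1) - ‖l‖) * c) := by
        rw [hexp, div_eq_mul_inv, ← exp_neg]; ring
    _ ≤ exp (l Y₀ + ‖l‖) * (T ^ n / exp ((l Y₀ - A) * T)) *
          ∫ Y in closedBall 0 T, exp (l Y) ∂μ := by
        gcongr
        exact exp_mul_measureReal_le_setIntegral_closedBall_exp μ l hY₀ hT

theorem tendsto_setIntegral_closedBall_inter_exp_div_one (l : E →L[ℝ] ℝ) {Y₀ : E}
    (hY₀ : ‖Y₀‖ = 1) {S : Set E} (hS : MeasurableSet S) {A : ℝ} (hA : 0 ≤ A) (hAY₀ : A < l Y₀)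
    (hSc : ∀ Y ∉ S, l Y ≤ A * ‖Y‖) :
    Tendsto (fun T => (∫ Y in closedBall 0 T ∩ S, exp (l Y) ∂μ) /
      ∫ Y in closedBall 0 T, exp (l Y) ∂μ) atTop (𝓝 1) := by
  have hoff := (tendsto_setIntegral_closedBall_inter_exp_div_zero μ l hY₀ hA hAY₀ hSc).const_sub 1
  rw [sub_zero] at hoff
  refine hoff.congr' ?_
  filter_upwards [eventually_gt_atTop 0] with T hT
  have hsplit := integral_inter_add_sdiff hS (integrableOn_exp_closedBall μ l 0 T)
  rw [eq_sub_of_add_eq hsplit, sub_div, div_self (setIntegral_closedBall_exp_pos μ l hT).ne']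
  rfl

end HaarEstimates

theorem stmt2_general (r : ℕ) (l : EuclideanSpace ℝ (Fin r) →ₗ[ℝ] ℝ) (δ : ℝ) (hδpos : 0 < δ)
    (hδ : IsGreatest ((fun Y => l Y) '' Metric.closedBall (0 : EuclideanSpace ℝ (Fin r)) 1) δ)
    (Y₀ : EuclideanSpace ℝ (Fin r)) (hY₀ : ‖Y₀‖ = 1) (hlY₀ : l Y₀ = δ)
    (huniq : ∀ Y : EuclideanSpace ℝ (Fin r), ‖Y‖ = 1 → l Y = δ → Y = Y₀)
    (S : Set (EuclideanSpace ℝ (Fin r))) (hSopen : IsOpen S)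
    (hScone : ∀ Y ∈ S, ∀ c : ℝ, 0 < c → c • Y ∈ S) (hY₀S : Y₀ ∈ S) :
    Tendsto (fun T : ℝ =>
        (∫ Y in Metric.closedBall (0 : EuclideanSpace ℝ (Fin r)) T ∩ S, Real.exp (l Y)) /
          (∫ Y in Metric.closedBall (0 : EuclideanSpace ℝ (Fin r)) T, Real.exp (l Y)))
      atTop (𝓝 1) := by
  obtain ⟨δ', hδ'δ, hδ'⟩ :=
    (isCompact_sphere (0 : EuclideanSpace ℝ (Fin r)) 1).exists_lt_forall_sdiff_le hSopen
      (LinearMap.continuous_of_finiteDimensional l).continuousOn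
      (fun u hu => hδ.2 ⟨u, sphere_subset_closedBall hu, rfl⟩)
      (fun u hu hlu => huniq u (mem_sphere_zero_iff_norm.1 hu) hlu ▸ hY₀S)
  have hoff : ∀ Y ∉ S, l Y ≤ max δ' 0 * ‖Y‖ := fun _ => l.le_mul_norm_of_notMem_cone hScone
    fun u hu huS => (hδ' u ⟨mem_sphere_zero_iff_norm.2 hu, huS⟩).trans (le_max_left _ _)
  exact tendsto_setIntegral_closedBall_inter_exp_div_one volume (LinearMap.toContinuousLinearMap l)
    hY₀ hSopen.measurableSet (le_max_right _ _) (hlY₀ ▸ max_lt hδ'δ hδpos) hoff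

/-- If `δ = max_{‖Y‖ ≤ 1} l Y > 0` is attained on the unit sphere at a unique point `Y₀`,
and `S` is an open convex cone containing `Y₀`, then
`∫_{B(0,T) ∩ S} e^{l Y} dY ∼ ∫_{B(0,T)} e^{l Y} dY` as `T → ∞`. -/
theorem stmt2 (r : ℕ) (l : EuclideanSpace ℝ (Fin r) →ₗ[ℝ] ℝ) (δ : ℝ) (hδpos : 0 < δ)
    (hδ : IsGreatest ((fun Y => l Y) '' Metric.closedBall (0 : EuclideanSpace ℝ (Fin r)) 1) δ)
    (Y₀ : EuclideanSpace ℝ (Fin r)) (hY₀ : ‖Y₀‖ = 1) (hlY₀ : l Y₀ = δ)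
    (huniq : ∀ Y : EuclideanSpace ℝ (Fin r), ‖Y‖ = 1 → l Y = δ → Y = Y₀)
    (S : Set (EuclideanSpace ℝ (Fin r))) (hSopen : IsOpen S) (hSconv : Convex ℝ S)
    (hScone : ∀ Y ∈ S, ∀ c : ℝ, 0 < c → c • Y ∈ S) (hY₀S : Y₀ ∈ S) :
    Tendsto (fun T : ℝ =>
        (∫ Y in Metric.closedBall (0 : EuclideanSpace ℝ (Fin r)) T ∩ S, Real.exp (l Y)) /
          (∫ Y in Metric.closedBall (0 : EuclideanSpace ℝ (Fin r)) T, Real.exp (l Y)))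
      atTop (𝓝 1) :=
  stmt2_general r l δ hδpos hδ Y₀ hY₀ hlY₀ huniq S hSopen hScone hY₀S
end

section
/- Let $G$ be a locally compact group with Haar measure $m$, $H$ a closed subgroup with left Haar measure $\lambda$, and $\Delta: N_G(H) \to \mathbb{R}_+$ the homomorphism satisfying $\lambda(n A n^{-1}) = \Delta(n)\lambda(A)$ for Borel $A \subset H$. Suppose for all $g_1, g_2 \in G$ the limit $\alpha(g_1,g_2) = \lim_{T\to\infty} \lambda(H_T[g_1^{-1},g_2])/\lambda(H_T)$ exists and is positive and finite. Then for every $h \in H$, $n \in N_G(H)$, and $g_1, g_2 \in G$: $\alpha(n h g_1, n g_2) = \Delta(n)\,\alpha(g_1, g_2)$. In particular, for $h_1, h_2 \in H$: $\alpha(h_1 g_1, h_2 g_2) = \Delta(h_2)\,\alpha(g_1, g_2)$. -/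
open MeasureTheory Filter Topology

/-! Conjugation by `n ∈ N_G(H)` composed with left translation by `h ∈ H` carries the sublevel
set `H_T[g₁⁻¹, g₂]` onto `H_T[(nhg₁)⁻¹, ng₂]`. Left translation preserves `λ` and conjugation
scales it by `Δ(n)`, so every ratio defining `α(nhg₁, ng₂)` is `Δ(n)` times the corresponding
ratio for `α(g₁, g₂)`, and the limits agree. -/

section LeftInvariant

variable {M : Type*} [Group M] [MeasurableSpace M] (μ : Measure M) [μ.IsMulLeftInvariant]

/-- Without `MeasurableMul`, left translation is still a.e.-measurable unless `μ = 0`, since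
`μ.map f = 0` for a non-a.e.-measurable `f`. -/
theorem measure_preimage_mul_le_of_isMulLeftInvariant (g : M) (A : Set M) :
    μ ((g * ·) ⁻¹' A) ≤ μ A := by
  by_cases hg : AEMeasurable (g * ·) μ
  · calc μ ((g * ·) ⁻¹' A) ≤ μ.map (g * ·) A := Measure.le_map_apply hg A
      _ = μ A := by rw [map_mul_left_eq_self μ g]
  · have hμ : μ = 0 := by rw [← map_mul_left_eq_self μ g, Measure.map_of_not_aemeasurable hg]
    simp [hμ]

theorem measure_preimage_mul_of_isMulLeftInvariant (g : M) (A : Set M) :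
    μ ((g * ·) ⁻¹' A) = μ A := by
  refine le_antisymm (measure_preimage_mul_le_of_isMulLeftInvariant μ g A) ?_
  calc μ A = μ ((g⁻¹ * ·) ⁻¹' ((g * ·) ⁻¹' A)) := by simp [Set.preimage_preimage]
    _ ≤ μ ((g * ·) ⁻¹' A) := measure_preimage_mul_le_of_isMulLeftInvariant μ _ _

end LeftInvariant

section Sublevel

variable {G : Type*} [Group G] {H : Subgroup G}

/-- The set `H_T[g₁, g₂]`. -/
def sublevelSet (H : Subgroup G) (D : G → ℝ) (g₁ g₂ : G) (T : ℝ) : Set H :=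
  {h : H | D (g₁ * h * g₂) < T}

def conjImage (n : G) (A : Set H) : Set H :=
  {k : H | ∃ a ∈ A, (k : G) = n * a * n⁻¹}

theorem sublevelSet_mul_mul_eq_conjImage {n : G} (hn : n ∈ Subgroup.normalizer (H : Set G))
    (h : H) (D : G → ℝ) (g₁ g₂ : G) (T : ℝ) :
    sublevelSet H D (n * h * g₁)⁻¹ (n * g₂) T =
      conjImage n ((h⁻¹ * ·) ⁻¹' sublevelSet H D g₁⁻¹ g₂ T) := by
  ext k
  simp only [sublevelSet, conjImage, Set.mem_ofPred_eq, Set.mem_preimage]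
  constructor
  · intro hk
    have hmem : n⁻¹ * (k : G) * n ∈ H :=
      (Subgroup.mem_normalizer_iff''.mp hn k).mp k.2
    refine ⟨⟨n⁻¹ * k * n, hmem⟩, ?_, by simp [mul_assoc]⟩
    convert hk using 2
    push_cast
    group
  · rintro ⟨a, ha, hka⟩
    convert ha using 2
    rw [hka]
    push_cast
    group

theorem measure_sublevelSet_mul_mul [MeasurableSpace H]
    (lam : Measure H) [lam.IsMulLeftInvariant] (D Δ : G → ℝ)
    (hΔ : ∀ n ∈ Subgroup.normalizer (H : Set G), ∀ A : Set H,
      (lam (conjImage n A)).toReal = Δ n * (lam A).toReal)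
    {n : G} (hn : n ∈ Subgroup.normalizer (H : Set G)) (h : H) (g₁ g₂ : G) (T : ℝ) :
    (lam (sublevelSet H D (n * h * g₁)⁻¹ (n * g₂) T)).toReal =
      Δ n * (lam (sublevelSet H D g₁⁻¹ g₂ T)).toReal := by
  rw [sublevelSet_mul_mul_eq_conjImage hn, hΔ n hn, measure_preimage_mul_of_isMulLeftInvariant]

end Sublevel

theorem stmt9_general {G : Type*} [Group G]
    (H : Subgroup G) [MeasurableSpace ↥H] (lam : Measure ↥H) [lam.IsMulLeftInvariant]
    (D : G → ℝ)
    (Δ : G → ℝ)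
    (hΔ : ∀ n ∈ Subgroup.normalizer (H : Set G), ∀ A : Set ↥H,
      (lam {h : ↥H | ∃ a ∈ A, (h : G) = n * ↑a * n⁻¹}).toReal = Δ n * (lam A).toReal)
    (α : G → G → ℝ)
    (hα : ∀ g₁ g₂ : G,
      Tendsto (fun T : ℝ =>
          (lam {h : ↥H | D (g₁⁻¹ * ↑h * g₂) < T}).toReal /
            (lam {h : ↥H | D (↑h) < T}).toReal)
        atTop (𝓝 (α g₁ g₂))) :
    (∀ h ∈ H, ∀ n ∈ Subgroup.normalizer (H : Set G), ∀ g₁ g₂ : G,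
        α (n * h * g₁) (n * g₂) = Δ n * α g₁ g₂) ∧
    (∀ h₁ ∈ H, ∀ h₂ ∈ H, ∀ g₁ g₂ : G,
        α (h₁ * g₁) (h₂ * g₂) = Δ h₂ * α g₁ g₂) := by
  have key : ∀ h ∈ H, ∀ n ∈ Subgroup.normalizer (H : Set G), ∀ g₁ g₂ : G,
      α (n * h * g₁) (n * g₂) = Δ n * α g₁ g₂ := by
    intro h hh n hn g₁ g₂
    refine tendsto_nhds_unique (hα _ _) (((hα g₁ g₂).const_mul (Δ n)).congr fun T => ?_)
    rw [← mul_div_assoc]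
    exact congrArg (· / _)
      (measure_sublevelSet_mul_mul lam D Δ hΔ hn ⟨h, hh⟩ g₁ g₂ T).symm
  refine ⟨key, fun h₁ hh₁ h₂ hh₂ g₁ g₂ => ?_⟩
  simpa only [mul_inv_cancel_left] using
    key (h₂⁻¹ * h₁) (H.mul_mem (H.inv_mem hh₂) hh₁) h₂ (H.le_normalizer hh₂) g₁ g₂

/-- Equivariance of the limit volume ratios `α` under the normalizer of `H`:
if `Δ : N_G(H) → ℝ₊` satisfies `λ(n A n⁻¹) = Δ(n) λ(A)` and the limits
`α(g₁,g₂) = lim_T λ(H_T[g₁⁻¹,g₂])/λ(H_T)` exist, positive and finite, then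
`α(nhg₁, ng₂) = Δ(n) α(g₁,g₂)` for `h ∈ H`, `n ∈ N_G(H)`; in particular
`α(h₁g₁, h₂g₂) = Δ(h₂) α(g₁,g₂)` for `h₁, h₂ ∈ H`. -/
theorem stmt9 {G : Type*} [Group G] [TopologicalSpace G] [IsTopologicalGroup G]
    (H : Subgroup G) [MeasurableSpace ↥H] (lam : Measure ↥H) [lam.IsMulLeftInvariant]
    (D : G → ℝ) (hDcont : Continuous D) (hDproper : Tendsto D (cocompact G) atTop)
    (Δ : G → ℝ)
    (hΔ : ∀ n ∈ Subgroup.normalizer (H : Set G), ∀ A : Set ↥H,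
      (lam {h : ↥H | ∃ a ∈ A, (h : G) = n * ↑a * n⁻¹}).toReal = Δ n * (lam A).toReal)
    (α : G → G → ℝ)
    (hα : ∀ g₁ g₂ : G,
      Tendsto (fun T : ℝ =>
          (lam {h : ↥H | D (g₁⁻¹ * ↑h * g₂) < T}).toReal /
            (lam {h : ↥H | D (↑h) < T}).toReal)
        atTop (𝓝 (α g₁ g₂)))
    (hαpos : ∀ g₁ g₂ : G, 0 < α g₁ g₂) :
    (∀ h ∈ H, ∀ n ∈ Subgroup.normalizer (H : Set G), ∀ g₁ g₂ : G,
        α (n * h * g₁) (n * g₂) = Δ n * α g₁ g₂) ∧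
    (∀ h₁ ∈ H, ∀ h₂ ∈ H, ∀ g₁ g₂ : G,
        α (h₁ * g₁) (h₂ * g₂) = Δ h₂ * α g₁ g₂) :=
  stmt9_general H lam D Δ hΔ α hα
end

section
/- Let $G$ be a locally compact second countable group, $\Gamma$ a lattice in $G$ with Haar measure $m$ normalized so the quotient has measure 1, and $D$ a continuous proper function on $G$ with $G_T = \{g : D(g) < T\}$, $\Gamma_T = \Gamma \cap G_T$. Assume: (I1) for every $\varepsilon > 0$ there are $\delta > 0$ and $T_0$ with $m(G_{(1+\delta)T}) \leq (1+\varepsilon)m(G_T)$ for $T > T_0$; (UC) for every $\varepsilon > 0$ there is a neighborhood $\mathcal{U}$ of $e$ with $D(gu) < (1+\varepsilon)D(g)$ for all $g, u \in G \times \mathcal{U}$; and the equidistribution property: for every $F \in C_c(G/\Gamma)$, $\frac{1}{m(G_T)}\int_{G_T} F(g^{-1}\pi(e))\,dm(g) \to \int_{G/\Gamma} F\,dm'$ as $T \to \infty$. Then $\#\Gamma_T \sim m(G_T)$ as $T \to \infty$. -/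
/-!
Fix a bump function `φ ≥ 0` with `φ(x⁻¹) = φ(x)`, supported in a small neighbourhood `U` of `1`,
and let `F(π g) = ∑_γ φ(g γ)` be its periodization. Unfolding, `∫_{G_T} F(π g⁻¹) dm` is a sum over
`γ ∈ Γ` of `∫_{G_T} φ(γ⁻¹ g) dm(g)`; the symmetry of `φ` is what makes each full term equal to
`∫ φ dm` without unimodularity. By (UC) the translate `γ U` lies inside `G_T` when `D γ < T / c`
and misses it when `D γ ≥ c T`, so the integral lies between `#Γ_{T/c} ∫ φ` and `#Γ_{cT} ∫ φ`.
Equidistribution makes it `∼ m(G_T) ∫ φ`, and (I1) shows that replacing `T` by `c T` or `T / c`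
changes `m(G_T)` by a factor close to `1`.
-/

open MeasureTheory Filter Topology Set Function Pointwise

theorem tendsto_of_forall_eventually_mem_Icc {α ι β : Type*} [TopologicalSpace β] [LinearOrder β]
    [OrderTopology β] {l : Filter α} {p : Filter ι} [p.NeBot] {f : α → β} {lo hi : ι → β}
    {a : β} (hlo : Tendsto lo p (𝓝 a)) (hhi : Tendsto hi p (𝓝 a))
    (h : ∀ᶠ i in p, ∀ᶠ x in l, f x ∈ Icc (lo i) (hi i)) : Tendsto f l (𝓝 a) := by
  refine tendsto_order.2 ⟨fun b hb => ?_, fun b hb => ?_⟩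
  · obtain ⟨i, hbi, hi⟩ := ((hlo.eventually (lt_mem_nhds hb)).and h).exists
    filter_upwards [hi] with x hx using hbi.trans_le hx.1
  · obtain ⟨i, hbi, hi⟩ := ((hhi.eventually (gt_mem_nhds hb)).and h).exists
    filter_upwards [hi] with x hx using hx.2.trans_lt hbi

theorem eventually_div_mem_Icc_of_dilation {N V J : ℝ → ℝ} {c η : ℝ} (hc : 0 < c) (hη : 0 < η)
    (hη1 : η < 1) (hV : ∀ᶠ T in atTop, 0 < V T)
    (hVc : ∀ᶠ T in atTop, V (c * T) ≤ (1 + η) * V T)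
    (hJ : Tendsto (fun T => J T / V T) atTop (𝓝 1))
    (hNJ : ∀ᶠ T in atTop, N (T / c) ≤ J T ∧ J T ≤ N (c * T)) :
    ∀ᶠ T in atTop, N T / V T ∈ Icc ((1 - η) / (1 + η)) ((1 + η) ^ 2) := by
  have hJV : ∀ᶠ T in atTop, (1 - η) * V T ≤ J T ∧ J T ≤ (1 + η) * V T := by
    filter_upwards [hJ.eventually (Ioo_mem_nhds (by linarith : 1 - η < 1)
      (by linarith : (1 : ℝ) < 1 + η)), hV] with T hT hVT
    rw [lt_div_iff₀ hVT, div_lt_iff₀ hVT] at hT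
    exact ⟨hT.1.le, hT.2.le⟩
  have hmul : Tendsto (c * ·) atTop atTop := tendsto_id.const_mul_atTop hc
  have hdiv : Tendsto (· / c) atTop atTop := tendsto_id.atTop_div_const hc
  filter_upwards [hV, hVc, hmul.eventually hNJ, hmul.eventually hJV, hdiv.eventually hNJ,
    hdiv.eventually hJV, hdiv.eventually hVc] with T hVT hVcT hNJc hJVc hNJd hJVd hVcd
  simp only [mul_div_cancel_left₀ _ hc.ne', mul_div_cancel₀ _ hc.ne'] at hNJc hNJd hVcd
  rw [mem_Icc, div_le_div_iff₀ (by linarith) hVT, div_le_iff₀ hVT]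
  constructor
  · calc (1 - η) * V T ≤ (1 - η) * ((1 + η) * V (T / c)) := by gcongr
      _ = (1 + η) * ((1 - η) * V (T / c)) := by ring
      _ ≤ N T * (1 + η) := by rw [mul_comm (N T)]; gcongr; exact hJVd.1.trans hNJd.2
  · calc N T ≤ (1 + η) * V (c * T) := hNJc.1.trans hJVc.2
      _ ≤ (1 + η) * ((1 + η) * V T) := by gcongr
      _ = (1 + η) ^ 2 * V T := by ring

theorem Filter.Tendsto.exists_isCompact_superset_setOf_lt {X : Type*} [TopologicalSpace X]
    {D : X → ℝ} (hD : Tendsto D (cocompact X) atTop) (T : ℝ) :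
    ∃ K, IsCompact K ∧ {x | D x < T} ⊆ K := by
  obtain ⟨K, hK, hKT⟩ := mem_cocompact.mp (hD.eventually_ge_atTop T)
  exact ⟨K, hK, fun x (hx : D x < T) => by_contra fun hxK => (hKT hxK : T ≤ D x).not_gt hx⟩

namespace Subgroup

section Periodization

variable {G M : Type*} [Group G] [AddCommMonoid M] [TopologicalSpace M] (Γ : Subgroup G)

theorem tsum_mul_mul_right_eq (f : G → M) (g : G) (γ₀ : Γ) :
    ∑' γ : Γ, f (g * γ₀ * γ) = ∑' γ : Γ, f (g * γ) := by
  simpa [mul_assoc] using (Equiv.mulLeft γ₀).tsum_eq fun γ : Γ => f (g * γ)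

theorem exists_quotient_eq_tsum_mul_right (f : G → M) :
    ∃ F : G ⧸ Γ → M, ∀ g : G, F (QuotientGroup.mk g) = ∑' γ : Γ, f (g * γ) := by
  refine ⟨fun x => x.liftOn' (fun g => ∑' γ : Γ, f (g * γ)) fun a b hab => ?_, fun _ => rfl⟩
  have hb : b = a * (⟨a⁻¹ * b, QuotientGroup.leftRel_apply.mp hab⟩ : Γ) := by simp
  rw [hb, tsum_mul_mul_right_eq]

end Periodization

section Discrete

variable {G : Type*} [Group G] [TopologicalSpace G] [IsTopologicalGroup G]
  (Γ : Subgroup G) [DiscreteTopology Γ]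

theorem finite_preimage_coe_of_isCompact {C : Set G} (hC : IsCompact C) :
    ((↑) ⁻¹' C : Set Γ).Finite := by
  obtain ⟨U, hU, hUinv, hUΓ⟩ := IsDiscrete.exists_nhds_eq_one_of_image_mulLeft_inter_nonempty Γ
    (isDiscrete_iff_discreteTopology.mpr ‹_›)
  obtain ⟨t, -, hCt⟩ := hC.elim_nhds_subcover (fun x => x • U) fun x _ => smul_mem_nhds_self.mpr hU
  have hsub : ∀ x : G, ((↑) ⁻¹' (x • U) : Set Γ).Subsingleton := by
    rintro x γ₁ ⟨u₁, hu₁, h₁⟩ γ₂ ⟨u₂, hu₂, h₂⟩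
    have hγ : (γ₂⁻¹ * γ₁ : Γ) = (u₂⁻¹ * u₁ : G) := by
      simp only [smul_eq_mul] at h₁ h₂
      simp [← h₁, ← h₂, mul_assoc]
    have hinv : ∀ {u}, u ∈ U → u⁻¹ ∈ U := fun hu => hUinv ▸ inv_mem_inv.mpr hu
    have := hUΓ _ (γ₂⁻¹ * γ₁).2 ⟨u₂⁻¹, ⟨u₁⁻¹, hinv hu₁, by rw [hγ]; group⟩, hinv hu₂⟩
    exact (inv_mul_eq_one.mp (Subtype.ext this)).symm
  refine (t.finite_toSet.biUnion fun x _ => (hsub x).finite).subset fun γ hγ => ?_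
  simpa using hCt hγ

variable [WeaklyLocallyCompactSpace G]

theorem locallyFinite_preimage_mul_right {K : Set G} (hK : IsCompact K) :
    LocallyFinite fun γ : Γ => (· * (γ : G)) ⁻¹' K := by
  intro x
  obtain ⟨L, hL, hLx⟩ := exists_compact_mem_nhds x
  refine ⟨L, hLx, (Γ.finite_preimage_coe_of_isCompact (hL.inv.mul hK)).subset ?_⟩
  rintro γ ⟨y, hyK, hyL⟩
  exact ⟨y⁻¹, inv_mem_inv.mpr hyL, y * γ, hyK, by group⟩

theorem isClosed_image_mk_of_isCompact {K : Set G} (hK : IsCompact K) (hKc : IsClosed K) :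
    IsClosed (QuotientGroup.mk '' K : Set (G ⧸ Γ)) := by
  rw [← (QuotientGroup.isQuotientMap_mk Γ).isClosed_preimage, QuotientGroup.preimage_image_mk]
  exact (Γ.locallyFinite_preimage_mul_right hK).isClosed_iUnion fun γ =>
    hKc.preimage (continuous_mul_const _)

variable {M : Type*} [AddCommMonoid M] [TopologicalSpace M]

theorem continuous_tsum_mul_right [ContinuousAdd M] {f : G → M} (hf : Continuous f)
    (hfs : HasCompactSupport f) : Continuous fun g => ∑' γ : Γ, f (g * γ) := by
  have hlf : LocallyFinite fun γ : Γ => support fun g => f (g * γ) :=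
    (Γ.locallyFinite_preimage_mul_right hfs).subset fun γ g hg => subset_tsupport f hg
  simp_rw [tsum_eq_finsum (hlf.point_finite _)]
  exact continuous_finsum (fun γ => hf.comp (continuous_mul_const _)) hlf

theorem exists_continuous_hasCompactSupport_eq_tsum [ContinuousAdd M] {f : G → M}
    (hf : Continuous f) (hfs : HasCompactSupport f) :
    ∃ F : G ⧸ Γ → M, (∀ g : G, F (QuotientGroup.mk g) = ∑' γ : Γ, f (g * γ)) ∧
      Continuous F ∧ HasCompactSupport F := by
  obtain ⟨F, hF⟩ := Γ.exists_quotient_eq_tsum_mul_right f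
  refine ⟨F, hF, ?_, ?_⟩
  · rw [(QuotientGroup.isQuotientMap_mk Γ).continuous_iff, show F ∘ _ = _ from funext hF]
    exact Γ.continuous_tsum_mul_right hf hfs
  · refine .intro' (hfs.image continuous_quotient_mk')
      (Γ.isClosed_image_mk_of_isCompact hfs (isClosed_tsupport f)) fun x hx => ?_
    obtain ⟨g, rfl⟩ := QuotientGroup.mk_surjective x
    rw [hF, tsum_congr fun γ => image_eq_zero_of_notMem_tsupport fun h =>
      hx ⟨_, h, QuotientGroup.mk_mul_of_mem g γ.2⟩, tsum_zero]

end Discrete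

end Subgroup

section Sandwich

variable {G : Type*} [Group G] {Γ : Subgroup G} {w D : G → ℝ} {c T : ℝ}

theorem apply_inv_mul_comm (hwinv : ∀ x, w x⁻¹ = w x) (g h : G) :
    w (g⁻¹ * h) = w (h⁻¹ * g) := by
  rw [← hwinv, mul_inv_rev, inv_inv]

theorem tsum_apply_inv_mul_eq_sum (hc : 0 < c)
    (hcD : ∀ g, ∀ u ∈ support w, D (g * u) < c * D g)
    (hfin : {γ : Γ | D γ < c * T}.Finite) {g : G} (hg : D g < T) :
    ∑' γ : Γ, w (g⁻¹ * γ) = ∑ γ ∈ hfin.toFinset, w (g⁻¹ * γ) := by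
  refine tsum_eq_sum fun γ hγ => by_contra fun hw => hγ (hfin.mem_toFinset.mpr ?_)
  calc D γ = D (g * (g⁻¹ * γ)) := by rw [mul_inv_cancel_left]
    _ < c * D g := hcD g _ hw
    _ ≤ c * T := by gcongr

variable [MeasurableSpace G] [MeasurableMul G] (m : Measure G) [m.IsMulLeftInvariant]

theorem integrable_apply_inv_mul (hw : Integrable w m) (hwinv : ∀ x, w x⁻¹ = w x) (h : G) :
    Integrable (fun g => w (g⁻¹ * h)) m := by
  simpa only [apply_inv_mul_comm hwinv _ h] using hw.comp_mul_left h⁻¹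

theorem integral_apply_inv_mul (hwinv : ∀ x, w x⁻¹ = w x) (h : G) :
    ∫ g, w (g⁻¹ * h) ∂m = ∫ g, w g ∂m := by
  simpa only [apply_inv_mul_comm hwinv _ h] using integral_mul_left_eq_self w h⁻¹

variable {m}

theorem setIntegral_tsum_apply_inv_mul_eq_sum (hw : Integrable w m) (hwinv : ∀ x, w x⁻¹ = w x)
    (hD : Measurable D) (hc : 0 < c) (hcD : ∀ g, ∀ u ∈ support w, D (g * u) < c * D g)
    (hfin : {γ : Γ | D γ < c * T}.Finite) :
    ∫ g in {g | D g < T}, ∑' γ : Γ, w (g⁻¹ * γ) ∂m =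
      ∑ γ ∈ hfin.toFinset, ∫ g in {g | D g < T}, w (g⁻¹ * γ) ∂m := by
  rw [setIntegral_congr_fun (measurableSet_lt hD measurable_const) fun g hg =>
    tsum_apply_inv_mul_eq_sum hc hcD hfin hg]
  exact integral_finsetSum _ fun γ _ => (integrable_apply_inv_mul m hw hwinv γ).restrict

theorem setIntegral_tsum_apply_inv_mul_le (hw : Integrable w m) (hw0 : 0 ≤ w)
    (hwinv : ∀ x, w x⁻¹ = w x) (hD : Measurable D) (hc : 0 < c)
    (hcD : ∀ g, ∀ u ∈ support w, D (g * u) < c * D g) (hfin : {γ : Γ | D γ < c * T}.Finite) :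
    ∫ g in {g | D g < T}, ∑' γ : Γ, w (g⁻¹ * γ) ∂m ≤
      Nat.card {γ : Γ | D γ < c * T} * ∫ g, w g ∂m := by
  rw [setIntegral_tsum_apply_inv_mul_eq_sum hw hwinv hD hc hcD hfin, Nat.card_coe_set_eq,
    Set.ncard_eq_toFinset_card _ hfin, ← nsmul_eq_mul, ← Finset.sum_const]
  refine Finset.sum_le_sum fun γ _ => ?_
  rw [← integral_apply_inv_mul m hwinv γ]
  exact setIntegral_le_integral (integrable_apply_inv_mul m hw hwinv γ)
    (.of_forall fun g => hw0 (g⁻¹ * γ))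

theorem card_mul_integral_le_setIntegral_tsum_apply_inv_mul (hw : Integrable w m) (hw0 : 0 ≤ w)
    (hwinv : ∀ x, w x⁻¹ = w x) (hD : Measurable D) (hc : 1 ≤ c) (hT : 0 ≤ T)
    (hcD : ∀ g, ∀ u ∈ support w, D (g * u) < c * D g) (hfin : {γ : Γ | D γ < c * T}.Finite) :
    Nat.card {γ : Γ | D γ < T / c} * ∫ g, w g ∂m ≤
      ∫ g in {g | D g < T}, ∑' γ : Γ, w (g⁻¹ * γ) ∂m := by
  have hc0 : 0 < c := by linarith
  have hsub : {γ : Γ | D γ < T / c} ⊆ {γ : Γ | D γ < c * T} := fun γ (hγ : D γ < T / c) =>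
    hγ.trans_le ((div_le_self hT hc).trans (le_mul_of_one_le_left hT hc))
  have hfin' := hfin.subset hsub
  rw [setIntegral_tsum_apply_inv_mul_eq_sum hw hwinv hD hc0 hcD hfin, Nat.card_coe_set_eq,
    Set.ncard_eq_toFinset_card _ hfin', ← nsmul_eq_mul, ← Finset.sum_const]
  refine le_trans (Finset.sum_le_sum fun γ hγ => le_of_eq ?_)
    (Finset.sum_le_sum_of_subset_of_nonneg (Finite.toFinset_subset_toFinset.mpr hsub)
      fun γ _ _ => setIntegral_nonneg (measurableSet_lt hD measurable_const) fun g _ => hw0 _)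
  -- a translate `γ • support w` with `D γ < T / c` lies inside `{D < T}`
  rw [← integral_apply_inv_mul m hwinv γ, setIntegral_eq_integral_of_forall_compl_eq_zero]
  refine fun g hg => by_contra fun hwg => hg ?_
  rw [apply_inv_mul_comm hwinv] at hwg
  calc D g = D ((γ : G) * ((γ : G)⁻¹ * g)) := by rw [mul_inv_cancel_left]
    _ < c * D γ := hcD γ _ hwg
    _ < c * (T / c) := by gcongr; exact hfin'.mem_toFinset.mp hγ
    _ = T := mul_div_cancel₀ T hc0.ne'

end Sandwich

theorem eventually_toReal_measure_setOf_lt_pos {X : Type*} [TopologicalSpace X]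
    [MeasurableSpace X] [Nonempty X] (μ : Measure X) [IsFiniteMeasureOnCompacts μ]
    [μ.IsOpenPosMeasure] {D : X → ℝ} (hDcont : Continuous D)
    (hDproper : Tendsto D (cocompact X) atTop) :
    ∀ᶠ T in atTop, 0 < (μ {x | D x < T}).toReal := by
  obtain ⟨x₀⟩ := ‹Nonempty X›
  filter_upwards [eventually_gt_atTop (D x₀)] with T hT
  obtain ⟨K, hK, hTK⟩ := hDproper.exists_isCompact_superset_setOf_lt T
  exact ENNReal.toReal_pos ((isOpen_lt hDcont continuous_const).measure_pos μ ⟨x₀, hT⟩).ne'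
    ((measure_mono hTK).trans_lt hK.measure_lt_top).ne

section Counting

variable {G : Type*} [Group G] [TopologicalSpace G] [IsTopologicalGroup G]
  [LocallyCompactSpace G]

theorem exists_inv_invariant_bump {U : Set G} (hU : U ∈ 𝓝 (1 : G)) :
    ∃ φ : G → ℝ, Continuous φ ∧ HasCompactSupport φ ∧ 0 ≤ φ ∧ 0 < φ 1 ∧
      (∀ x, φ x⁻¹ = φ x) ∧ support φ ⊆ U := by
  have hV : U ∩ U⁻¹ ∈ 𝓝 (1 : G) := inter_mem hU (inv_mem_nhds_one G hU)
  obtain ⟨f, hf1, hf0, hfs, hf01⟩ := exists_continuous_one_zero_of_isCompact isCompact_singleton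
    isOpen_interior.isClosed_compl
    (disjoint_singleton_left.mpr fun h => h (mem_interior_iff_mem_nhds.mpr hV))
  have hfV : ∀ x ∉ U ∩ U⁻¹, f x = 0 := fun x hx => hf0 fun h => hx (interior_subset h)
  refine ⟨fun x => f x + f x⁻¹, by fun_prop, hfs.add (hfs.comp_homeomorph (.inv G)),
    fun x => add_nonneg (hf01 x).1 (hf01 x⁻¹).1, ?_, fun x => by simp [add_comm], ?_⟩
  · simp [hf1 (mem_singleton 1)]
  · refine fun x hx => by_contra fun hxU => hx ?_
    dsimp only
    rw [hfV x fun h => hxU h.1, hfV x⁻¹ fun h => hxU (by simpa using h.2), add_zero]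

variable [MeasurableSpace G] [BorelSpace G] (m : Measure G) [m.IsHaarMeasure]
  (Γ : Subgroup G) [DiscreteTopology Γ] (m' : Measure (G ⧸ Γ))

theorem exists_tendsto_between_card_of_equidistribution
    (hcompat : ∀ f : G → ℝ, Continuous f → HasCompactSupport f →
      ∀ F : G ⧸ Γ → ℝ, (∀ g : G, F (QuotientGroup.mk g) = ∑' γ : Γ, f (g * γ)) →
        ∫ g, f g ∂m = ∫ x, F x ∂m')
    {D : G → ℝ} (hDcont : Continuous D) (hDproper : Tendsto D (cocompact G) atTop)
    (hequi : ∀ F : G ⧸ Γ → ℝ, Continuous F → HasCompactSupport F →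
      Tendsto (fun T : ℝ =>
          (∫ g in {g : G | D g < T}, F (QuotientGroup.mk g⁻¹) ∂m) /
            (m {g : G | D g < T}).toReal)
        atTop (𝓝 (∫ x, F x ∂m')))
    {c : ℝ} (hc : 1 ≤ c) {U : Set G} (hU : U ∈ 𝓝 (1 : G))
    (hUD : ∀ g, ∀ u ∈ U, D (g * u) < c * D g) :
    ∃ J : ℝ → ℝ, Tendsto (fun T => J T / (m {g | D g < T}).toReal) atTop (𝓝 1) ∧
      ∀ᶠ T in atTop, (Nat.card {γ : Γ | D γ < T / c} : ℝ) ≤ J T ∧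
        J T ≤ Nat.card {γ : Γ | D γ < c * T} := by
  obtain ⟨φ, hφc, hφs, hφ0, hφ1, hφinv, hφU⟩ := exists_inv_invariant_bump hU
  obtain ⟨F, hF, hFc, hFs⟩ := Γ.exists_continuous_hasCompactSupport_eq_tsum hφc hφs
  have hφi : Integrable φ m := hφc.integrable_of_hasCompactSupport hφs
  have ha : 0 < ∫ g, φ g ∂m := (integral_pos_iff_support_of_nonneg hφ0 hφi).mpr
    (hφc.isOpen_support.measure_pos m ⟨1, hφ1.ne'⟩)
  have hcD : ∀ g, ∀ u ∈ support φ, D (g * u) < c * D g := fun g u hu => hUD g u (hφU hu)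
  have hfin : ∀ T, {γ : Γ | D γ < T}.Finite := fun T => by
    obtain ⟨K, hK, hTK⟩ := hDproper.exists_isCompact_superset_setOf_lt T
    exact (Γ.finite_preimage_coe_of_isCompact hK).subset fun γ hγ => hTK hγ
  refine ⟨fun T => (∫ g in {g | D g < T}, F (QuotientGroup.mk g⁻¹) ∂m) / ∫ g, φ g ∂m, ?_, ?_⟩
  · have := (hequi F hFc hFs).div_const (∫ g, φ g ∂m)
    rw [← hcompat φ hφc hφs F hF, div_self ha.ne'] at this
    simpa only [div_right_comm] using this
  · filter_upwards [eventually_ge_atTop 0] with T hT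
    simp only [hF, le_div_iff₀ ha, div_le_iff₀ ha]
    exact ⟨card_mul_integral_le_setIntegral_tsum_apply_inv_mul hφi hφ0 hφinv hDcont.measurable hc
        hT hcD (hfin _),
      setIntegral_tsum_apply_inv_mul_le hφi hφ0 hφinv hDcont.measurable (by linarith) hcD
        (hfin _)⟩

end Counting

theorem stmt13_general {G : Type*} [Group G] [TopologicalSpace G] [IsTopologicalGroup G]
    [LocallyCompactSpace G] [MeasurableSpace G] [BorelSpace G]
    (m : Measure G) [m.IsHaarMeasure]
    (Γ : Subgroup G) [DiscreteTopology Γ]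
    (m' : Measure (G ⧸ Γ))
    (hcompat : ∀ f : G → ℝ, Continuous f → HasCompactSupport f →
      ∀ F : G ⧸ Γ → ℝ, (∀ g : G, F (QuotientGroup.mk g) = ∑' γ : Γ, f (g * γ)) →
        ∫ g, f g ∂m = ∫ x, F x ∂m')
    (D : G → ℝ) (hDcont : Continuous D) (hDproper : Tendsto D (cocompact G) atTop)
    (hI1 : ∀ ε : ℝ, 0 < ε → ∃ δ : ℝ, 0 < δ ∧ ∃ T₀ : ℝ, ∀ T > T₀,
      (m {g : G | D g < (1 + δ) * T}).toReal ≤ (1 + ε) * (m {g : G | D g < T}).toReal)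
    (hUC : ∀ ε : ℝ, 0 < ε → ∃ U ∈ 𝓝 (1 : G), ∀ g u : G, u ∈ U →
      D (g * u) < (1 + ε) * D g)
    (hequi : ∀ F : G ⧸ Γ → ℝ, Continuous F → HasCompactSupport F →
      Tendsto (fun T : ℝ =>
          (∫ g in {g : G | D g < T}, F (QuotientGroup.mk g⁻¹) ∂m) /
            (m {g : G | D g < T}).toReal)
        atTop (𝓝 (∫ x, F x ∂m'))) :
    Tendsto (fun T : ℝ =>
        (Nat.card {γ : Γ | D ↑γ < T} : ℝ) / (m {g : G | D g < T}).toReal)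
      atTop (𝓝 1) := by
  have hlo : Tendsto (fun η : ℝ => (1 - η) / (1 + η)) (𝓝[>] 0) (𝓝 1) := by
    have : ContinuousAt (fun η : ℝ => (1 - η) / (1 + η)) 0 := by fun_prop (disch := norm_num)
    simpa using this.tendsto.mono_left nhdsWithin_le_nhds
  have hhi : Tendsto (fun η : ℝ => (1 + η) ^ 2) (𝓝[>] 0) (𝓝 1) := by
    have : ContinuousAt (fun η : ℝ => (1 + η) ^ 2) 0 := by fun_prop
    simpa using this.tendsto.mono_left nhdsWithin_le_nhds
  refine tendsto_of_forall_eventually_mem_Icc hlo hhi ?_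
  filter_upwards [Ioo_mem_nhdsGT one_pos] with η hη
  obtain ⟨δ, hδ, T₀, hT₀⟩ := hI1 η hη.1
  obtain ⟨U, hU, hUD⟩ := hUC δ hδ
  obtain ⟨J, hJ, hNJ⟩ := exists_tendsto_between_card_of_equidistribution m Γ m' hcompat hDcont
    hDproper hequi (by linarith) hU hUD
  exact eventually_div_mem_Icc_of_dilation (by linarith) hη.1 hη.2
    (eventually_toReal_measure_setOf_lt_pos m hDcont hDproper)
    ((eventually_gt_atTop T₀).mono hT₀) hJ hNJ

/-- Lattice point counting: if `Γ` is a lattice in a locally compact second countable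
group `G` (with Haar measure `m` normalized so that the quotient `G/Γ` has an induced
probability measure `m'`), `D` is a continuous proper function on `G` with balls
`G_T = {D < T}` satisfying conditions I1 and UC, and Haar averages over `G_T` of
`F(π(g⁻¹))` equidistribute towards `∫ F dm'` for every compactly supported continuous
`F` on `G/Γ`, then `#Γ_T ∼ m(G_T)` as `T → ∞`. -/
theorem stmt13 {G : Type*} [Group G] [TopologicalSpace G] [IsTopologicalGroup G]
    [LocallyCompactSpace G] [SecondCountableTopology G] [MeasurableSpace G] [BorelSpace G]
    (m : Measure G) [m.IsHaarMeasure]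
    (Γ : Subgroup G) [DiscreteTopology Γ]
    (m' : Measure (G ⧸ Γ)) [IsProbabilityMeasure m']
    (hcompat : ∀ f : G → ℝ, Continuous f → HasCompactSupport f →
      ∀ F : G ⧸ Γ → ℝ, (∀ g : G, F (QuotientGroup.mk g) = ∑' γ : Γ, f (g * γ)) →
        ∫ g, f g ∂m = ∫ x, F x ∂m')
    (D : G → ℝ) (hDcont : Continuous D) (hDproper : Tendsto D (cocompact G) atTop)
    (hI1 : ∀ ε : ℝ, 0 < ε → ∃ δ : ℝ, 0 < δ ∧ ∃ T₀ : ℝ, ∀ T > T₀,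
      (m {g : G | D g < (1 + δ) * T}).toReal ≤ (1 + ε) * (m {g : G | D g < T}).toReal)
    (hUC : ∀ ε : ℝ, 0 < ε → ∃ U ∈ 𝓝 (1 : G), ∀ g u : G, u ∈ U →
      D (g * u) < (1 + ε) * D g)
    (hequi : ∀ F : G ⧸ Γ → ℝ, Continuous F → HasCompactSupport F →
      Tendsto (fun T : ℝ =>
          (∫ g in {g : G | D g < T}, F (QuotientGroup.mk g⁻¹) ∂m) /
            (m {g : G | D g < T}).toReal)
        atTop (𝓝 (∫ x, F x ∂m'))) :
    Tendsto (fun T : ℝ =>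
        (Nat.card {γ : Γ | D ↑γ < T} : ℝ) / (m {g : G | D g < T}).toReal)
      atTop (𝓝 1) :=
  stmt13_general m Γ m' hcompat D hDcont hDproper hI1 hUC hequi
end
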